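/- arXiv:1410.3375 — 4 statements merged into one kernel-verified Lean document; each statement's English description precedes it below -/
import Mathlib

section
/- Let G be a graph containing a clique H on k ≥ 3 vertices, and let v be a vertex of G outside H such that v has at least one neighbour in H and at least one non-neighbour in H. Then G contains an induced k-vertex subgraph H̃ with |V(H) ∩ V(H̃)| = k−1 such that the number of edges of H̃ differs in parity from the number of edges of H (which is C(k,2)). -/
open scoped Classical
open Finset

/-- Number of edges of the subgraph of `G` induced by the vertex set `U`. -/
noncomputable def inducedEdges {V : Type*} (G : SimpleGraph V) (U : Finset V) : ℕ :=
  Nat.card {e : Sym2 V // e ∈ G.edgeSet ∧ ∀ v ∈ e, v ∈ U}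

/-!
Remove a vertex `u` of the clique `H` and add `v`. The result has
`C(k-1, 2) + |N(v) ∩ (V(H) \ {u})|` edges, while `C(k, 2) = C(k-1, 2) + (k-1)`, so the parities
differ exactly when `|N(v) ∩ (V(H) \ {u})| ≢ k - 1 (mod 2)`. Removing a neighbour of `v` or a
non-neighbour of `v` gives values of `|N(v) ∩ (V(H) \ {u})|` of opposite parity, so one of the
two choices works.
-/

theorem Finset.exists_card_filter_erase_not_modEq_two {α : Type*} [DecidableEq α] {s : Finset α}
    {p : α → Prop} [DecidablePred p] (hp : ∃ a ∈ s, p a) (hnp : ∃ a ∈ s, ¬ p a) (n : ℕ) :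
    ∃ a ∈ s, ¬ #{x ∈ s.erase a | p x} ≡ n [MOD 2] := by
  simp only [filter_erase, Nat.ModEq]
  by_cases hpar : #{x ∈ s | p x} % 2 = n % 2
  · obtain ⟨a, has, ha⟩ := hp
    have hmem : a ∈ {x ∈ s | p x} := mem_filter.2 ⟨has, ha⟩
    have hpos := card_pos.2 ⟨a, hmem⟩
    refine ⟨a, has, ?_⟩
    rw [card_erase_of_mem hmem]
    omega
  · obtain ⟨a, has, ha⟩ := hnp
    refine ⟨a, has, ?_⟩
    rwa [erase_eq_of_notMem fun h ↦ ha (mem_filter.1 h).2]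

namespace SimpleGraph

variable {V : Type*} (G : SimpleGraph V)

theorem inducedEdges_eq_card_filter_sym2 (s : Finset V) :
    inducedEdges G s = #{e ∈ s.sym2 | e ∈ G.edgeSet} := by
  rw [inducedEdges, ← Nat.card_eq_finsetCard]
  exact Nat.card_congr <| Equiv.subtypeEquivRight fun e ↦ by simp [mem_sym2_iff, and_comm]

theorem inducedEdges_insert [DecidableEq V] {s : Finset V} {v : V} (hv : v ∉ s) :
    inducedEdges G (insert v s) = inducedEdges G s + #{w ∈ s | G.Adj v w} := by
  simp only [← cons_eq_insert _ _ hv, inducedEdges_eq_card_filter_sym2, sym2_cons,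
    filter_disjUnion, card_disjUnion, filter_map, card_map, filter_cons, Function.comp_def,
    Sym2.mkEmbedding_apply, mem_edgeSet, G.irrefl, if_false, add_comm]

theorem IsClique.inducedEdges_eq {s : Finset V} (hs : G.IsClique (s : Set V)) :
    inducedEdges G s = (#s).choose 2 := by
  induction s using Finset.induction_on with
  | empty => simp [inducedEdges_eq_card_filter_sym2]
  | insert v s hv ih =>
    rw [coe_insert, isClique_insert] at hs
    have hadj : {w ∈ s | G.Adj v w} = s :=
      filter_true_of_mem fun w hw ↦ hs.2 w hw (ne_of_mem_of_not_mem hw hv).symm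
    rw [inducedEdges_insert G hv, ih hs.1, hadj, card_insert_of_notMem hv,
      Nat.choose_succ_succ', Nat.choose_one_right, add_comm]

end SimpleGraph

theorem stmt_0_general {V : Type*} [DecidableEq V] (G : SimpleGraph V) (k : ℕ)
    (U : Finset V) (hU : G.IsNClique k U) (v : V) (hv : v ∉ U)
    (hnb : ∃ u ∈ U, G.Adj v u) (hnnb : ∃ u ∈ U, ¬ G.Adj v u) :
    ∃ W : Finset V, W.card = k ∧ (W ∩ U).card = k - 1 ∧
      ¬ (inducedEdges G W ≡ k.choose 2 [MOD 2]) := by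
  obtain ⟨u, huU, hpar⟩ := exists_card_filter_erase_not_modEq_two hnb hnnb (k - 1)
  obtain ⟨m, rfl⟩ : ∃ m, k = m + 1 :=
    Nat.exists_eq_add_one_of_ne_zero (hU.card_eq ▸ card_ne_zero_of_mem huU)
  rw [Nat.add_sub_cancel] at hpar ⊢
  have hvU' : v ∉ U.erase u := fun h ↦ hv (mem_of_mem_erase h)
  have hcard : #(U.erase u) = m := by rw [card_erase_of_mem huU, hU.card_eq, Nat.add_sub_cancel]
  refine ⟨insert v (U.erase u), ?_, ?_, ?_⟩
  · rw [card_insert_of_notMem hvU', hcard]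
  · rw [insert_inter_of_notMem hv, erase_inter, inter_self, hcard]
  · rw [G.inducedEdges_insert hvU', (hU.isClique.subset (erase_subset u U)).inducedEdges_eq,
      hcard, Nat.choose_succ_succ', Nat.choose_one_right, add_comm m]
    exact fun h ↦ hpar (Nat.ModEq.add_left_cancel' _ h)

theorem stmt_0 {V : Type*} [Fintype V] [DecidableEq V] (G : SimpleGraph V) (k : ℕ)
    (hk : 3 ≤ k) (U : Finset V) (hU : G.IsNClique k U) (v : V) (hv : v ∉ U)
    (hnb : ∃ u ∈ U, G.Adj v u) (hnnb : ∃ u ∈ U, ¬ G.Adj v u) :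
    ∃ W : Finset V, W.card = k ∧ (W ∩ U).card = k - 1 ∧
      ¬ (inducedEdges G W ≡ k.choose 2 [MOD 2]) :=
  stmt_0_general G k U hU v hv hnb hnnb
end

section
/- Let k ≥ 4 be even, let G be a graph containing a clique H on k vertices, and let v be a vertex of G outside H that is not adjacent to all vertices of H. Then G contains an induced k-vertex subgraph H̃ with |V(H) ∩ V(H̃)| = k−1 such that e(H̃) ≢ C(k,2) (mod 2). -/
open scoped Classical

/-- `G` is a complete graph. -/
def IsCompleteGraph {V : Type*} (G : SimpleGraph V) : Prop :=
  ∀ u v : V, u ≠ v → G.Adj u v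

/-- `G` is the disjoint union of two complete graphs. -/
def IsTwoCliques {V : Type*} (G : SimpleGraph V) : Prop :=
  ∃ A : Set V, (∀ u ∈ A, ∀ v ∈ A, u ≠ v → G.Adj u v) ∧
    (∀ u ∉ A, ∀ v ∉ A, u ≠ v → G.Adj u v) ∧
    (∀ u ∈ A, ∀ v ∉ A, ¬ G.Adj u v)

/-- `G` is a complete bipartite graph. -/
def IsCompleteBipartite {V : Type*} (G : SimpleGraph V) : Prop :=
  ∃ A : Set V, (∀ u ∈ A, ∀ v ∈ A, ¬ G.Adj u v) ∧
    (∀ u ∉ A, ∀ v ∉ A, ¬ G.Adj u v) ∧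
    (∀ u ∈ A, ∀ v ∉ A, G.Adj u v)

/-!
Let `N` be the set of neighbours of `v` in the clique `U`. Replacing a vertex `w ∈ U` by `v`
yields a `k`-set spanning `C(k-1, 2) + |N \ {w}|` edges, while `C(k, 2) = C(k-1, 2) + (k-1)`
with `k - 1` odd. So it suffices to pick `w` with `|N \ {w}|` even: a non-neighbour of `v` if
`|N|` is even, a neighbour otherwise.
-/

open Finset

theorem Nat.succ_choose_two (n : ℕ) : (n + 1).choose 2 = n.choose 2 + n := by
  rw [Nat.choose_succ_succ', Nat.choose_one_right, add_comm]

theorem Finset.exists_even_card_filter_erase {α : Type*} [DecidableEq α] {s : Finset α}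
    {p : α → Prop} [DecidablePred p] (h : ∃ a ∈ s, ¬ p a) : ∃ w ∈ s, Even #{x ∈ s.erase w | p x} := by
  obtain ⟨a, ha, hpa⟩ := h
  by_cases heven : Even #{x ∈ s | p x}
  · refine ⟨a, ha, ?_⟩
    rwa [filter_erase, erase_eq_of_notMem (by simp [hpa])]
  · obtain ⟨w, hw⟩ : {x ∈ s | p x}.Nonempty := by
      rw [nonempty_iff_ne_empty]
      rintro hempty
      simp [hempty] at heven
    refine ⟨w, (mem_filter.mp hw).1, ?_⟩
    rw [filter_erase, card_erase_of_mem hw]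
    rw [Nat.not_even_iff_odd] at heven
    exact Nat.Odd.sub_odd heven odd_one

section inducedEdges

variable {V : Type*} (G : SimpleGraph V)

theorem inducedEdges_eq_card_filter_sym2 (s : Finset V) :
    inducedEdges G s = #{e ∈ s.sym2 | e ∈ G.edgeSet} := by
  rw [inducedEdges, ← Nat.card_eq_finsetCard]
  exact Nat.card_congr <| Equiv.subtypeEquivRight fun e => by
    rw [mem_filter, mem_sym2_iff, and_comm]

theorem inducedEdges_insert [DecidableEq V] {s : Finset V} {v : V} (hv : v ∉ s) :
    inducedEdges G (insert v s) = inducedEdges G s + #{x ∈ s | G.Adj v x} := by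
  rw [← cons_eq_insert _ _ hv, inducedEdges_eq_card_filter_sym2, inducedEdges_eq_card_filter_sym2,
    sym2_cons, filter_disjUnion, card_disjUnion, filter_map, card_map, filter_cons_of_neg,
    add_comm]
  · rfl
  · simp

theorem inducedEdges_of_isClique [DecidableEq V] {s : Finset V} (hs : G.IsClique (s : Set V)) :
    inducedEdges G s = (#s).choose 2 := by
  induction s using Finset.induction_on with
  | empty => simp [inducedEdges_eq_card_filter_sym2]
  | insert v s hv ih =>
    rw [coe_insert] at hs
    have hadj : {x ∈ s | G.Adj v x} = s := filter_true_of_mem fun x hx =>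
      hs (Set.mem_insert v _) (Set.mem_insert_of_mem v hx) (ne_of_mem_of_not_mem hx hv).symm
    rw [inducedEdges_insert G hv, ih (hs.subset (Set.subset_insert v _)), hadj,
      card_insert_of_notMem hv, Nat.succ_choose_two]

end inducedEdges

theorem stmt_1_general {V : Type*} [DecidableEq V] (G : SimpleGraph V) (k : ℕ)
    (hke : Even k) (U : Finset V) (hU : G.IsNClique k U) (v : V) (hv : v ∉ U)
    (hnnb : ∃ u ∈ U, ¬ G.Adj v u) :
    ∃ W : Finset V, W.card = k ∧ (W ∩ U).card = k - 1 ∧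
      ¬ (inducedEdges G W ≡ k.choose 2 [MOD 2]) := by
  obtain ⟨w, hw, heven⟩ := exists_even_card_filter_erase hnnb
  have hvU : v ∉ U.erase w := fun h => hv (mem_of_mem_erase h)
  have hcard : #(U.erase w) = k - 1 := by rw [card_erase_of_mem hw, hU.card_eq]
  have hk : 1 ≤ k := hU.card_eq ▸ card_pos.mpr ⟨w, hw⟩
  refine ⟨insert v (U.erase w), ?_, ?_, ?_⟩
  · rw [card_insert_of_notMem hvU, hcard]
    omega
  · rw [insert_inter_of_notMem hv, inter_eq_left.mpr (erase_subset w U), hcard]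
  · rw [inducedEdges_insert G hvU, inducedEdges_of_isClique G (hU.isClique.subset (by simp)),
      hcard]
    obtain ⟨m, rfl⟩ : ∃ m, k = m + 1 := ⟨k - 1, by omega⟩
    rw [Nat.add_sub_cancel, Nat.succ_choose_two, Nat.ModEq]
    obtain ⟨a, ha⟩ := heven
    obtain ⟨b, hb⟩ := hke
    omega

theorem stmt_1 {V : Type*} [Fintype V] [DecidableEq V] (G : SimpleGraph V) (k : ℕ)
    (hk : 4 ≤ k) (hke : Even k) (U : Finset V) (hU : G.IsNClique k U) (v : V) (hv : v ∉ U)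
    (hnnb : ∃ u ∈ U, ¬ G.Adj v u) :
    ∃ W : Finset V, W.card = k ∧ (W ∩ U).card = k - 1 ∧
      ¬ (inducedEdges G W ≡ k.choose 2 [MOD 2]) :=
  stmt_1_general G k hke U hU v hv hnnb
end

section
/- Let (P,≤) be a finite lattice, f : P → ℝ a function, and let S = {x ∈ P : ∃ y ∈ P with y ≤ x and f(y) ≠ 0} be the upward closure of the support of f. Enumerate S = {x₁,…,xₙ} and define the n×n matrix A by a_{ij} = f(xᵢ ∧ xⱼ). Then det(A) = ∏_{i=1}^{n} Σ_{xⱼ ∈ S, xⱼ ≤ xᵢ} f(xⱼ) μ(xⱼ, xᵢ), where μ is the Möbius function of the poset P. -/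
/-!
With `g p = ∑ q, f q * μ(q, p)`, Möbius inversion gives `f w = ∑_{p ∈ S, p ≤ w} g p`, since `g`
vanishes off `S`. Hence `A = Z * diag (g ∘ x) * Zᵀ` with `Z i j = [x j ≤ x i]`, and `Z` is
unitriangular once `S` is listed along a linear extension of `P`, so `det A = ∏ i, g (x i)`.
-/

open scoped Classical

open Finset Matrix

section Moebius

variable {P R : Type*} [Fintype P] [PartialOrder P] [Ring R]

structure IsMoebiusFunction (mu : P → P → R) : Prop where
  apply_self : ∀ x, mu x x = 1
  apply_of_lt : ∀ x y, x < y → mu x y = -∑ z ∈ univ.filter (fun z => x ≤ z ∧ z < y), mu x z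
  apply_of_not_le : ∀ x y, ¬ x ≤ y → mu x y = 0

namespace IsMoebiusFunction

variable {mu : P → P → R} (hmu : IsMoebiusFunction mu)
include hmu

theorem sum_interval_eq_ite (q w : P) :
    ∑ p ∈ univ.filter (fun p => q ≤ p ∧ p ≤ w), mu q p = if q = w then 1 else 0 := by
  rcases eq_or_ne q w with rfl | hne
  · have : univ.filter (fun p => q ≤ p ∧ p ≤ q) = {q} := by
      ext p; simp [le_antisymm_iff, and_comm]
    rw [this, sum_singleton, hmu.apply_self, if_pos rfl]
  rw [if_neg hne]
  by_cases hqw : q ≤ w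
  · have : univ.filter (fun p => q ≤ p ∧ p ≤ w)
        = insert w (univ.filter (fun p => q ≤ p ∧ p < w)) := by
      ext p
      simp only [mem_insert, mem_filter, mem_univ, true_and]
      constructor
      · rintro ⟨hqp, hpw⟩
        exact hpw.eq_or_lt.imp id (⟨hqp, ·⟩)
      · rintro (rfl | ⟨hqp, hpw⟩)
        exacts [⟨hqw, le_rfl⟩, ⟨hqp, hpw.le⟩]
    rw [this, sum_insert (by simp), hmu.apply_of_lt q w (lt_of_le_of_ne hqw hne), neg_add_cancel]
  · exact sum_eq_zero fun p hp => absurd ((mem_filter.1 hp).2.1.trans (mem_filter.1 hp).2.2) hqw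

theorem inversion (f : P → R) (w : P) :
    ∑ p ∈ univ.filter (· ≤ w), ∑ q, f q * mu q p = f w := by
  calc ∑ p ∈ univ.filter (· ≤ w), ∑ q, f q * mu q p
      = ∑ q, f q * ∑ p ∈ univ.filter (fun p => q ≤ p ∧ p ≤ w), mu q p := by
        rw [sum_comm]
        refine sum_congr rfl fun q _ => ?_
        rw [mul_sum, sum_filter, sum_filter]
        refine sum_congr rfl fun p _ => ?_
        by_cases hqp : q ≤ p <;> simp [hqp, hmu.apply_of_not_le]
    _ = f w := by simp [hmu.sum_interval_eq_ite]

theorem sum_mul_eq_zero_of_forall_le {f : P → R} {p : P} (hf : ∀ y ≤ p, f y = 0) :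
    ∑ q, f q * mu q p = 0 :=
  sum_eq_zero fun q _ => by
    by_cases hqp : q ≤ p
    · rw [hf q hqp, zero_mul]
    · rw [hmu.apply_of_not_le q p hqp, mul_zero]

end IsMoebiusFunction

end Moebius

section ZetaMatrix

variable {ι P R : Type*} [Fintype ι] [DecidableEq ι] [CommRing R]

def zetaMatrix [LE P] [DecidableLE P] (x : ι → P) : Matrix ι ι R :=
  of fun i j => if x j ≤ x i then 1 else 0

theorem det_zetaMatrix [PartialOrder P] [DecidableLE P] {x : ι → P} (hx : Function.Injective x) :
    (zetaMatrix x : Matrix ι ι R).det = 1 := by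
  -- order `ι` along a linear extension of `P`, for which the zeta matrix is unitriangular
  let : LinearOrder ι := LinearOrder.lift' (toLinearExtension ∘ x) hx
  rw [det_of_isLowerTriangular]
  · simp [zetaMatrix]
  · intro i j hij
    simp only [zetaMatrix, of_apply, ite_eq_right_iff]
    exact fun hle => absurd (toLinearExtension.monotone hle)
      (hij : toLinearExtension (x i) < toLinearExtension (x j)).not_ge

theorem of_sum_le_inf_eq_mul [Lattice P] [DecidableLE P] (x : ι → P) (d : ι → R) :
    (of fun i j => ∑ k ∈ univ.filter (fun k => x k ≤ x i ⊓ x j), d k)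
      = zetaMatrix x * diagonal d * (zetaMatrix x)ᵀ := by
  ext i j
  rw [of_apply, mul_apply, sum_filter]
  simp only [mul_diagonal, transpose_apply, zetaMatrix, of_apply, le_inf_iff, ite_and]
  exact sum_congr rfl fun k _ => by split_ifs <;> simp

theorem det_of_sum_le_inf [Lattice P] [DecidableLE P] {x : ι → P} (hx : Function.Injective x)
    (d : ι → R) :
    (of fun i j => ∑ k ∈ univ.filter (fun k => x k ≤ x i ⊓ x j), d k).det = ∏ i, d i := by
  rw [of_sum_le_inf_eq_mul, det_mul, det_mul, det_transpose, det_zetaMatrix hx, det_diagonal,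
    one_mul, mul_one]

end ZetaMatrix

theorem stmt_12 {P : Type*} [Fintype P] [Lattice P] (f : P → ℝ)
    (mu : P → P → ℝ)
    (hmu_refl : ∀ x : P, mu x x = 1)
    (hmu_lt : ∀ x y : P, x < y →
      mu x y = -∑ z ∈ Finset.univ.filter (fun z : P => x ≤ z ∧ z < y), mu x z)
    (hmu_not : ∀ x y : P, ¬ x ≤ y → mu x y = 0)
    (n : ℕ) (x : Fin n → P) (hx : Function.Injective x)
    (hxS : ∀ p : P, (∃ y ≤ p, f y ≠ 0) ↔ ∃ i : Fin n, x i = p) :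
    Matrix.det (Matrix.of fun i j : Fin n => f (x i ⊓ x j)) =
      ∏ i : Fin n,
        ∑ p ∈ Finset.univ.filter (fun p : P => (∃ y ≤ p, f y ≠ 0) ∧ p ≤ x i),
          f p * mu p (x i) := by
  have hmu : IsMoebiusFunction mu := ⟨hmu_refl, hmu_lt, hmu_not⟩
  set g : P → ℝ := fun p => ∑ q, f q * mu q p
  -- `g` vanishes off `S`, so Möbius inversion needs only the terms indexed by `S`
  have hf : ∀ w, f w = ∑ k ∈ univ.filter (fun k => x k ≤ w), g (x k) := by
    intro w
    rw [← hmu.inversion f w, sum_filter, sum_filter]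
    refine (Fintype.sum_of_injective x hx _ _ (fun p hp => ?_) fun _ => rfl).symm
    have hpS : ∀ y ≤ p, f y = 0 := by
      by_contra! h
      exact hp ((hxS p).1 h)
    rw [hmu.sum_mul_eq_zero_of_forall_le hpS, ite_self]
  have hg : ∀ i, g (x i)
      = ∑ p ∈ univ.filter (fun p => (∃ y ≤ p, f y ≠ 0) ∧ p ≤ x i), f p * mu p (x i) := by
    refine fun i => (sum_filter_of_ne fun p _ hp => ⟨⟨p, le_rfl, left_ne_zero_of_mul hp⟩, ?_⟩).symm
    by_contra h
    exact hp (by rw [hmu_not p (x i) h, mul_zero])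
  calc (of fun i j => f (x i ⊓ x j)).det
      = (of fun i j => ∑ k ∈ univ.filter (fun k => x k ≤ x i ⊓ x j), g (x k)).det := by
        simp only [← hf]
    _ = _ := by rw [det_of_sum_le_inf hx]; exact prod_congr rfl fun i _ => hg i
end

section
/- Let S = {x₁,…,xₙ} be a subset of a finite lattice P = {x₁,…,xₘ}, let f : P → ℝ, and let A be the n×n matrix with a_{ij} = f(xᵢ ∧ xⱼ). Then A = E Λ Eᵀ, where E is the n×m matrix with e_{ij} = 1 if xⱼ ≤ xᵢ and 0 otherwise, and Λ is the m×m diagonal matrix whose r-th diagonal entry is Ψ_f(x_r) = Σ_{xⱼ ≤ x_r} f(xⱼ) μ(xⱼ, x_r), with μ the Möbius function of P. -/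
open scoped Classical
open Matrix

/-! Ψ_f is the Möbius inverse of f, so `f a = ∑_{p ≤ a} Ψ_f p`. For `a = sᵢ ⊓ sⱼ` the condition
`p ≤ a` splits as `p ≤ sᵢ ∧ p ≤ sⱼ`, which is exactly the `(i, j)` entry of `E Λ Eᵀ` once the sum over
`P` is reindexed along the enumeration `x`. -/

section MobiusInversion

variable {P R : Type*} [Fintype P] [PartialOrder P] [Ring R] (mu : P → P → R)

structure IsMobiusFunction : Prop where
  refl : ∀ x : P, mu x x = 1
  lt : ∀ x y : P, x < y →
    mu x y = -∑ z ∈ Finset.univ.filter (fun z : P => x ≤ z ∧ z < y), mu x z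

noncomputable def generalizedTotient (f : P → R) (a : P) : R :=
  ∑ y ∈ Finset.univ.filter (fun y : P => y ≤ a), f y * mu y a

variable {mu}

theorem IsMobiusFunction.sum_Icc (hmu : IsMobiusFunction mu) (y a : P) :
    ∑ p ∈ Finset.univ.filter (fun p : P => y ≤ p ∧ p ≤ a), mu y p = if y = a then 1 else 0 := by
  by_cases hle : y ≤ a
  swap
  · rw [if_neg (fun h => hle h.le), Finset.sum_eq_zero]
    intro p hp
    simp only [Finset.mem_filter] at hp
    exact absurd (hp.2.1.trans hp.2.2) hle
  rcases hle.lt_or_eq with hlt | rfl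
  · have hIcc : Finset.univ.filter (fun p : P => y ≤ p ∧ p ≤ a)
        = insert a (Finset.univ.filter (fun p : P => y ≤ p ∧ p < a)) := by
      ext p
      simp only [Finset.mem_insert, Finset.mem_filter, Finset.mem_univ, true_and, le_iff_lt_or_eq]
      constructor
      · rintro ⟨hyp, hpa | rfl⟩ <;> tauto
      · rintro (rfl | ⟨hyp, hpa⟩) <;> tauto
    rw [hIcc, Finset.sum_insert (by simp), hmu.lt y a hlt, if_neg hlt.ne]
    abel
  · have hIcc : Finset.univ.filter (fun p : P => y ≤ p ∧ p ≤ y) = {y} := by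
      ext p
      simp [le_antisymm_iff, and_comm]
    simp [hIcc, hmu.refl]

theorem sum_generalizedTotient (hmu : IsMobiusFunction mu) (f : P → R) (a : P) :
    ∑ p ∈ Finset.univ.filter (fun p : P => p ≤ a), generalizedTotient mu f p = f a := by
  calc ∑ p ∈ Finset.univ.filter (fun p : P => p ≤ a), generalizedTotient mu f p
      = ∑ y ∈ Finset.univ.filter (fun y : P => y ≤ a),
          ∑ p ∈ Finset.univ.filter (fun p : P => y ≤ p ∧ p ≤ a), f y * mu y p := by
        refine Finset.sum_comm' fun p y => ?_
        simp only [Finset.mem_filter, Finset.mem_univ, true_and]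
        exact ⟨fun ⟨hpa, hyp⟩ => ⟨⟨hyp, hpa⟩, hyp.trans hpa⟩, fun ⟨⟨hyp, hpa⟩, _⟩ => ⟨hpa, hyp⟩⟩
    _ = ∑ y ∈ Finset.univ.filter (fun y : P => y ≤ a), f y * if y = a then 1 else 0 := by
        simp only [← Finset.mul_sum, hmu.sum_Icc]
    _ = f a := by simp

end MobiusInversion

theorem meet_matrix_eq_mul_diagonal_mul_transpose {P R ι κ : Type*} [Fintype P] [Lattice P]
    [Ring R] [Fintype ι] [DecidableEq ι] {mu : P → P → R}
    (hmu : IsMobiusFunction mu)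
    (f : P → R) (x : ι → P) (hx : Function.Bijective x) (s : κ → P) :
    (Matrix.of fun i j => f (s i ⊓ s j)) =
      (Matrix.of fun i k => if x k ≤ s i then (1 : R) else 0) *
        Matrix.diagonal (fun k => generalizedTotient mu f (x k)) *
        (Matrix.of fun i k => if x k ≤ s i then (1 : R) else 0)ᵀ := by
  ext i j
  calc f (s i ⊓ s j)
      = ∑ p, if p ≤ s i ⊓ s j then generalizedTotient mu f p else 0 := by
        rw [← Finset.sum_filter, sum_generalizedTotient hmu]
    _ = ∑ k, if x k ≤ s i ⊓ s j then generalizedTotient mu f (x k) else 0 :=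
        (hx.sum_comp fun p => if p ≤ s i ⊓ s j then generalizedTotient mu f p else 0).symm
    _ = _ := by
        rw [Matrix.mul_apply]
        simp only [Matrix.mul_diagonal, Matrix.of_apply, Matrix.transpose_apply, le_inf_iff]
        refine Finset.sum_congr rfl fun k _ => ?_
        split_ifs <;> simp_all

theorem stmt_14_general {P : Type*} [Fintype P] [Lattice P] (f : P → ℝ)
    (mu : P → P → ℝ)
    (hmu_refl : ∀ x : P, mu x x = 1)
    (hmu_lt : ∀ x y : P, x < y →
      mu x y = -∑ z ∈ Finset.univ.filter (fun z : P => x ≤ z ∧ z < y), mu x z)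
    (n m : ℕ) (hnm : n ≤ m) (x : Fin m → P) (hx : Function.Bijective x) :
    (Matrix.of fun i j : Fin n => f (x (Fin.castLE hnm i) ⊓ x (Fin.castLE hnm j))) =
      (Matrix.of fun (i : Fin n) (j : Fin m) =>
          if x j ≤ x (Fin.castLE hnm i) then (1 : ℝ) else 0) *
        Matrix.diagonal (fun r : Fin m =>
          ∑ y ∈ Finset.univ.filter (fun y : P => y ≤ x r), f y * mu y (x r)) *
        (Matrix.of fun (i : Fin n) (j : Fin m) =>
          if x j ≤ x (Fin.castLE hnm i) then (1 : ℝ) else 0)ᵀ := by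
  exact meet_matrix_eq_mul_diagonal_mul_transpose ⟨hmu_refl, hmu_lt⟩ f x hx _

theorem stmt_14 {P : Type*} [Fintype P] [Lattice P] (f : P → ℝ)
    (mu : P → P → ℝ)
    (hmu_refl : ∀ x : P, mu x x = 1)
    (hmu_lt : ∀ x y : P, x < y →
      mu x y = -∑ z ∈ Finset.univ.filter (fun z : P => x ≤ z ∧ z < y), mu x z)
    (hmu_not : ∀ x y : P, ¬ x ≤ y → mu x y = 0)
    (n m : ℕ) (hnm : n ≤ m) (x : Fin m → P) (hx : Function.Bijective x) :
    (Matrix.of fun i j : Fin n => f (x (Fin.castLE hnm i) ⊓ x (Fin.castLE hnm j))) =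
      (Matrix.of fun (i : Fin n) (j : Fin m) =>
          if x j ≤ x (Fin.castLE hnm i) then (1 : ℝ) else 0) *
        Matrix.diagonal (fun r : Fin m =>
          ∑ y ∈ Finset.univ.filter (fun y : P => y ≤ x r), f y * mu y (x r)) *
        (Matrix.of fun (i : Fin n) (j : Fin m) =>
          if x j ≤ x (Fin.castLE hnm i) then (1 : ℝ) else 0)ᵀ :=
  stmt_14_general f mu hmu_refl hmu_lt n m hnm x hx
end
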